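/- The partial products ∏_{n=0}^{N} ((4n+3)/(4n+1))^{u_n} converge as N → ∞ to 2. Equivalently, f(1/4, 3/4) = 3/2, where f(b,c) := lim_{N→∞} ∏_{n=1}^{N} ((n+b)/(n+c))^{u_n}. -/

import Mathlib

/-!
Write `f(b, c) = ∏_{n ≥ 1} ((n + b)/(n + c))^{u_n}`. Since `u (2m) = u m = -u (2m+1)`, grouping
the factors `n = 2m` and `n = 2m + 1` gives a product whose logarithm is an absolutely
convergent series, so `f(b, c)` converges for `b, c > -1`. The same grouping gives the
functional equation `f(b, c) = f(b/2, c/2) · (1+c)/(1+b) · f((1+c)/2, (1+b)/2)`, and trivially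
`f(b, c) f(c, d) = f(b, d)`. At `(b, c) = (0, 1)` these force `f(1/2, 1)² = 2`
(Woods–Robbins), and then at `(1/2, 1)` they give
`f(1/4, 3/4) = f(1/4, 1/2) f(1/2, 1) f(1, 3/4) = (3/4) f(1/2, 1)² = 3/2`.
Finally `∏_{n=0}^{N} ((4n+3)/(4n+1))^{u_n} = 3 f_N(3/4, 1/4) = 3 / f_N(1/4, 3/4) → 2`.
-/

open Filter Finset Topology

/-- The Thue–Morse sequence with values `±1`: `u n = (-1)^(s₂ n)` where `s₂ n`
is the sum of the binary digits of `n`. -/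
def u (n : ℕ) : ℤ := (-1) ^ (Nat.digits 2 n).sum

lemma u_zero : u 0 = 1 := by simp [u]

lemma u_one : u 1 = -1 := by simp [u]

lemma u_two_mul (n : ℕ) : u (2 * n) = u n := by
  rcases Nat.eq_zero_or_pos n with rfl | hn
  · rfl
  · rw [u, Nat.digits_def' one_lt_two (by omega)]
    simp [u]

lemma u_two_mul_add_one (n : ℕ) : u (2 * n + 1) = -u n := by
  rw [u, Nat.digits_def' one_lt_two (by omega)]
  simp [u, pow_add, Nat.mul_add_div]

lemma abs_u (n : ℕ) : |(u n : ℝ)| = 1 := by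
  simp [u]

lemma Filter.Tendsto.of_two_mul_of_two_mul_add_one {α : Type*} {f : ℕ → α} {l : Filter α}
    (he : Tendsto (fun n => f (2 * n)) atTop l) (ho : Tendsto (fun n => f (2 * n + 1)) atTop l) :
    Tendsto f atTop l := by
  intro s hs
  obtain ⟨a, ha⟩ := eventually_atTop.1 (he hs)
  obtain ⟨b, hb⟩ := eventually_atTop.1 (ho hs)
  refine eventually_atTop.2 ⟨2 * a + 2 * b + 1, fun n hn => ?_⟩
  obtain ⟨k, rfl | rfl⟩ := Nat.even_or_odd' n
  · exact ha k (by omega)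
  · exact hb k (by omega)

lemma sum_range_two_mul_u_mul (h : ℕ → ℝ) (N : ℕ) :
    ∑ n ∈ range (2 * N), u n * h n = ∑ m ∈ range N, u m * (h (2 * m) - h (2 * m + 1)) := by
  induction N with
  | zero => simp
  | succ N ih =>
    rw [Nat.mul_succ, sum_range_succ, sum_range_succ, ih, sum_range_succ, u_two_mul_add_one,
      u_two_mul]
    push_cast
    ring

lemma tendsto_sum_u_mul {h : ℕ → ℝ} (h0 : Tendsto h atTop (𝓝 0))
    (hs : Summable fun m => |h (2 * m) - h (2 * m + 1)|) :
    Tendsto (fun N => ∑ n ∈ range N, u n * h n) atTop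
      (𝓝 (∑' m, u m * (h (2 * m) - h (2 * m + 1)))) := by
  have hsum : Summable fun m => (u m : ℝ) * (h (2 * m) - h (2 * m + 1)) :=
    hs.of_norm_bounded fun m => by rw [Real.norm_eq_abs, abs_mul, abs_u, one_mul]
  have heven : Tendsto (fun N => ∑ n ∈ range (2 * N), u n * h n) atTop
      (𝓝 (∑' m, u m * (h (2 * m) - h (2 * m + 1)))) := by
    simpa only [sum_range_two_mul_u_mul] using hsum.hasSum.tendsto_sum_nat
  have hlast : Tendsto (fun N => (u (2 * N) : ℝ) * h (2 * N)) atTop (𝓝 0) :=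
    squeeze_zero_norm (fun N => by rw [Real.norm_eq_abs, abs_mul, abs_u, one_mul])
      (by simpa using (h0.comp (tendsto_id.const_mul_atTop' two_pos)).abs)
  refine heven.of_two_mul_of_two_mul_add_one ?_
  simpa only [sum_range_succ, add_zero] using heven.add hlast

open Real

lemma Real.abs_log_sub_log_le {a x y : ℝ} (ha : 0 < a) (hx : a ≤ x) (hy : a ≤ y) :
    |log x - log y| ≤ |x - y| / a := by
  have key : ∀ {x y : ℝ}, a ≤ x → a ≤ y → log x - log y ≤ |x - y| / a := fun {x y} hx hy => by
    have hy0 : 0 < y := ha.trans_le hy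
    calc log x - log y = log (x / y) := (log_div (by linarith) hy0.ne').symm
      _ ≤ x / y - 1 := log_le_sub_one_of_pos (div_pos (ha.trans_le hx) hy0)
      _ = (x - y) / y := by field_simp
      _ ≤ |x - y| / y := by gcongr; exact le_abs_self _
      _ ≤ |x - y| / a := by gcongr
  rw [abs_sub_le_iff]
  exact ⟨key hx hy, abs_sub_comm x y ▸ key hy hx⟩

lemma tendsto_log_add_sub_log_add (b c : ℝ) :
    Tendsto (fun n : ℕ => log (n + b) - log (n + c)) atTop (𝓝 0) := by
  have hratio := tendsto_add_mul_div_add_mul_atTop_nhds b c 1 one_ne_zero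
  simp only [one_mul, div_one] at hratio
  have hlim := (continuousAt_log one_ne_zero).tendsto.comp hratio
  rw [log_one] at hlim
  refine hlim.congr' ?_
  filter_upwards [eventually_gt_atTop (⌈max (-b) (-c)⌉₊)] with n hn
  have hn' : max (-b) (-c) < n := Nat.lt_of_ceil_lt hn
  rw [Function.comp_apply, log_div (by grind) (by grind), add_comm b, add_comm c]

lemma summable_abs_log_sub_log_pair {b c : ℝ} (hb : -1 < b) (hc : -1 < c) :
    Summable fun m : ℕ => |(log (↑(2 * m) + b) - log (↑(2 * m) + c)) -
      (log (↑(2 * m + 1) + b) - log (↑(2 * m + 1) + c))| := by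
  have hsq : Summable fun m : ℕ => |b - c| * (1 / ((m + 1 : ℕ) : ℝ) ^ 2) :=
    ((summable_nat_add_iff 1).2 (summable_one_div_nat_pow.2 one_lt_two)).mul_left _
  refine (summable_nat_add_iff 1).1 (hsq.of_nonneg_of_le (fun _ => abs_nonneg _) fun m => ?_)
  have hk : (1 : ℝ) ≤ m + 1 := by linarith [(m.cast_nonneg : (0 : ℝ) ≤ m)]
  push_cast
  generalize (m : ℝ) + 1 = k at hk ⊢
  have h1 : 0 < 2 * k + b := by linarith
  have h2 : 0 < 2 * k + c := by linarith
  have h3 : 0 < 2 * k + 1 + b := by linarith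
  have h4 : 0 < 2 * k + 1 + c := by linarith
  have hx : k ^ 2 ≤ (2 * k + b) * (2 * k + 1 + c) := by nlinarith
  have hy : k ^ 2 ≤ (2 * k + c) * (2 * k + 1 + b) := by nlinarith
  have hlog : log (2 * k + b) - log (2 * k + c) - (log (2 * k + 1 + b) - log (2 * k + 1 + c)) =
      log ((2 * k + b) * (2 * k + 1 + c)) - log ((2 * k + c) * (2 * k + 1 + b)) := by
    rw [log_mul h1.ne' h4.ne', log_mul h2.ne' h3.ne']
    ring
  rw [hlog]
  -- the two products differ by exactly `b - c`
  calc _ ≤ |(2 * k + b) * (2 * k + 1 + c) - (2 * k + c) * (2 * k + 1 + b)| / k ^ 2 :=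
        abs_log_sub_log_le (by positivity) hx hy
    _ = |b - c| * (1 / k ^ 2) := by ring_nf

noncomputable def tmPartialProd (b c : ℝ) (N : ℕ) : ℝ :=
  ∏ n ∈ Icc 1 N, (((n : ℝ) + b) / ((n : ℝ) + c)) ^ (u n)

lemma tmPartialProd_eq_exp_sum {b c : ℝ} (hb : -1 < b) (hc : -1 < c) (N : ℕ) :
    tmPartialProd b c N = exp (∑ n ∈ Icc 1 N, u n * (log (n + b) - log (n + c))) := by
  rw [tmPartialProd, exp_sum]
  refine prod_congr rfl fun n hn => ?_
  have hn1 : (1 : ℝ) ≤ n := by exact_mod_cast (mem_Icc.1 hn).1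
  have hpos : 0 < ((n : ℝ) + b) / (n + c) := div_pos (by linarith) (by linarith)
  rw [← log_div (by linarith) (by linarith), ← rpow_intCast, rpow_def_of_pos hpos, mul_comm]

lemma sum_Icc_one_eq_sum_range_sub {M : Type*} [AddCommGroup M] (g : ℕ → M) (N : ℕ) :
    ∑ n ∈ Icc 1 N, g n = ∑ n ∈ range (N + 1), g n - g 0 := by
  rw [← sum_range_add_sum_Ico g (Nat.le_add_left 1 N), sum_range_one, Ico_add_one_right_eq_Icc,
    add_sub_cancel_left]

lemma exists_tendsto_tmPartialProd {b c : ℝ} (hb : -1 < b) (hc : -1 < c) :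
    ∃ L, 0 < L ∧ Tendsto (tmPartialProd b c) atTop (𝓝 L) := by
  have hsum := (tendsto_add_atTop_iff_nat 1).2 (tendsto_sum_u_mul
    (tendsto_log_add_sub_log_add b c) (summable_abs_log_sub_log_pair hb hc))
  have hIcc := hsum.sub_const ((u 0 : ℝ) * (log ((0 : ℕ) + b) - log ((0 : ℕ) + c)))
  simp only [← sum_Icc_one_eq_sum_range_sub] at hIcc
  exact ⟨_, exp_pos _, ((continuous_exp.tendsto _).comp hIcc).congr
    fun N => (tmPartialProd_eq_exp_sum hb hc N).symm⟩

/-- The `f(b, c)` of the paper. -/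
noncomputable def tmProd (b c : ℝ) : ℝ := limUnder atTop (tmPartialProd b c)

lemma tendsto_tmPartialProd {b c : ℝ} (hb : -1 < b) (hc : -1 < c) :
    Tendsto (tmPartialProd b c) atTop (𝓝 (tmProd b c)) := by
  obtain ⟨L, -, hL⟩ := exists_tendsto_tmPartialProd hb hc
  rwa [tmProd, hL.limUnder_eq]

lemma tmProd_pos {b c : ℝ} (hb : -1 < b) (hc : -1 < c) : 0 < tmProd b c := by
  obtain ⟨L, hL0, hL⟩ := exists_tendsto_tmPartialProd hb hc
  rwa [tmProd, hL.limUnder_eq]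

lemma tmPartialProd_swap (b c : ℝ) (N : ℕ) : tmPartialProd c b N = (tmPartialProd b c N)⁻¹ := by
  simp only [tmPartialProd, ← prod_inv_distrib, ← inv_zpow, inv_div]

lemma tmPartialProd_mul_tmPartialProd {c : ℝ} (b d : ℝ) (hc : -1 < c) (N : ℕ) :
    tmPartialProd b c N * tmPartialProd c d N = tmPartialProd b d N := by
  rw [tmPartialProd, tmPartialProd, tmPartialProd, ← prod_mul_distrib]
  refine prod_congr rfl fun n hn => ?_
  have hn1 : (1 : ℝ) ≤ n := by exact_mod_cast (mem_Icc.1 hn).1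
  rw [← mul_zpow, div_mul_div_cancel₀ (by linarith)]

lemma tmPartialProd_two_mul_add_one (b c : ℝ) (N : ℕ) :
    tmPartialProd b c (2 * N + 1) =
      tmPartialProd (b / 2) (c / 2) N * ((1 + c) / (1 + b)) *
        tmPartialProd ((1 + c) / 2) ((1 + b) / 2) N := by
  induction N with
  | zero => simp [tmPartialProd, u_one]
  | succ N ih =>
    have heven : ((((2 * N + 1 + 1 : ℕ) : ℝ) + b) / ((2 * N + 1 + 1 : ℕ) + c)) ^ u (2 * N + 1 + 1) =
        ((((N + 1 : ℕ) : ℝ) + b / 2) / ((N + 1 : ℕ) + c / 2)) ^ u (N + 1) := by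
      rw [show 2 * N + 1 + 1 = 2 * (N + 1) by ring, u_two_mul,
        ← mul_div_mul_left (((N + 1 : ℕ) : ℝ) + b / 2) _ two_ne_zero]
      congr 2 <;> push_cast <;> ring
    have hodd : ((((2 * N + 1 + 1 + 1 : ℕ) : ℝ) + b) / ((2 * N + 1 + 1 + 1 : ℕ) + c)) ^
        u (2 * N + 1 + 1 + 1) =
        ((((N + 1 : ℕ) : ℝ) + (1 + c) / 2) / ((N + 1 : ℕ) + (1 + b) / 2)) ^ u (N + 1) := by
      rw [show 2 * N + 1 + 1 + 1 = 2 * (N + 1) + 1 by ring, u_two_mul_add_one, zpow_neg,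
        ← inv_zpow, inv_div,
        ← mul_div_mul_left (((N + 1 : ℕ) : ℝ) + (1 + c) / 2) _ two_ne_zero]
      congr 2 <;> push_cast <;> ring
    simp only [tmPartialProd] at ih ⊢
    rw [show 2 * (N + 1) + 1 = 2 * N + 1 + 1 + 1 by ring, prod_Icc_succ_top (by omega),
      prod_Icc_succ_top (by omega), ih, prod_Icc_succ_top (by omega), prod_Icc_succ_top (by omega),
      heven, hodd]
    ring

lemma tmProd_swap {b c : ℝ} (hb : -1 < b) (hc : -1 < c) : tmProd c b = (tmProd b c)⁻¹ :=
  tendsto_nhds_unique (tendsto_tmPartialProd hc hb) <|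
    ((tendsto_tmPartialProd hb hc).inv₀ (tmProd_pos hb hc).ne').congr fun N =>
      (tmPartialProd_swap b c N).symm

lemma tmProd_mul_tmProd {b c d : ℝ} (hb : -1 < b) (hc : -1 < c) (hd : -1 < d) :
    tmProd b c * tmProd c d = tmProd b d :=
  tendsto_nhds_unique ((tendsto_tmPartialProd hb hc).mul (tendsto_tmPartialProd hc hd)) <| by
    simpa only [tmPartialProd_mul_tmPartialProd b d hc] using tendsto_tmPartialProd hb hd

lemma tmProd_eq_mul_tmProd_half {b c : ℝ} (hb : -1 < b) (hc : -1 < c) :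
    tmProd b c =
      tmProd (b / 2) (c / 2) * ((1 + c) / (1 + b)) * tmProd ((1 + c) / 2) ((1 + b) / 2) :=
  tendsto_nhds_unique ((tendsto_tmPartialProd hb hc).comp
      (tendsto_atTop_mono (fun N => show N ≤ 2 * N + 1 by omega) tendsto_id)) <| by
    simpa only [Function.comp_def, tmPartialProd_two_mul_add_one] using
      ((tendsto_tmPartialProd (by linarith) (by linarith)).mul_const _).mul
        (tendsto_tmPartialProd (by linarith) (by linarith))

lemma sq_tmProd_half_one : tmProd (1 / 2) 1 ^ 2 = 2 := by
  have hsplit := tmProd_eq_mul_tmProd_half (b := 0) (c := 1) (by norm_num) (by norm_num)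
  norm_num at hsplit
  rw [← tmProd_mul_tmProd (b := 0) (c := 1 / 2) (d := 1) (by norm_num) (by norm_num) (by norm_num),
    tmProd_swap (b := 1 / 2) (c := 1) (by norm_num) (by norm_num)] at hsplit
  have hX := tmProd_pos (b := 0) (c := 1 / 2) (by norm_num) (by norm_num)
  have hY := tmProd_pos (b := 1 / 2) (c := 1) (by norm_num) (by norm_num)
  rw [mul_assoc, mul_right_inj' hX.ne', eq_mul_inv_iff_mul_eq₀ hY.ne'] at hsplit
  rw [sq, hsplit]

lemma tmProd_quarter_three_quarters : tmProd (1 / 4) (3 / 4) = 3 / 2 := by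
  have hsplit := tmProd_eq_mul_tmProd_half (b := 1 / 2) (c := 1) (by norm_num) (by norm_num)
  norm_num at hsplit
  calc tmProd (1 / 4) (3 / 4) = tmProd (1 / 4) (1 / 2) * tmProd (1 / 2) 1 * tmProd 1 (3 / 4) := by
        rw [tmProd_mul_tmProd, tmProd_mul_tmProd] <;> norm_num
    _ = 3 / 4 * tmProd (1 / 2) 1 ^ 2 := by rw [sq]; nth_rw 2 [hsplit]; ring
    _ = 3 / 2 := by rw [sq_tmProd_half_one]; norm_num

lemma prod_range_succ_eq_mul_tmPartialProd (b c : ℝ) (N : ℕ) :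
    ∏ n ∈ range (N + 1), (((n : ℝ) + b) / ((n : ℝ) + c)) ^ (u n) = b / c * tmPartialProd b c N := by
  rw [← prod_range_mul_prod_Ico _ (Nat.le_add_left 1 N), prod_range_one, Ico_add_one_right_eq_Icc,
    tmPartialProd, u_zero]
  simp

/-- The partial products `∏_{n=0}^{N} ((4n+3)/(4n+1))^{u_n}` converge to `2`;
equivalently, `f(1/4, 3/4) = 3/2`, i.e. the partial products
`∏_{n=1}^{N} ((n+1/4)/(n+3/4))^{u_n}` converge to `3/2`. -/
theorem stmt_17 :
    Tendsto (fun N : ℕ => ∏ n ∈ Finset.range (N + 1),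
      ((4 * (n : ℝ) + 3) / (4 * (n : ℝ) + 1)) ^ (u n)) atTop (𝓝 2) ∧
    Tendsto (fun N : ℕ => ∏ n ∈ Finset.Icc 1 N,
      (((n : ℝ) + 1 / 4) / ((n : ℝ) + 3 / 4)) ^ (u n)) atTop (𝓝 (3 / 2)) := by
  refine ⟨?_, tmProd_quarter_three_quarters ▸ tendsto_tmPartialProd (by norm_num) (by norm_num)⟩
  have hfactor : ∀ n : ℕ, (4 * (n : ℝ) + 3) / (4 * n + 1) = (n + 3 / 4) / (n + 1 / 4) := fun n => by
    rw [← mul_div_mul_left ((n : ℝ) + 3 / 4) _ four_ne_zero]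
    ring_nf
  have hlim := (tendsto_tmPartialProd (b := 3 / 4) (c := 1 / 4) (by norm_num)
    (by norm_num)).const_mul (3 / 4 / (1 / 4))
  rw [tmProd_swap (by norm_num) (by norm_num), tmProd_quarter_three_quarters,
    show (3 / 4 / (1 / 4) * (3 / 2)⁻¹ : ℝ) = 2 by norm_num] at hlim
  simpa only [hfactor, prod_range_succ_eq_mul_tmPartialProd] using hlim
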